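/- Suppose the probability distribution μ on ℕ satisfies ∑_{n≥1} n μ(n) < ∞. Then for any initial configuration X₀ ∈ 𝒮 and any k ∈ ℤ such that X₀(k) < ∞, the IBM(μ) started from X₀ satisfies X_∞(k) < ∞ almost surely. -/

import Mathlib

open MeasureTheory ProbabilityTheory Filter Set
open scoped ENNReal Topology Classical

noncomputable section

/-- A configuration of balls: the number of balls (in `ℤ₊ ∪ {∞}`) in each bin. -/
abbrev Config := ℤ → ℕ∞

/-- A valid configuration: the support is nonempty and bounded above. -/
def IsConfig (X : Config) : Prop :=
  (∃ j, X j ≠ 0) ∧ ∃ M : ℤ, ∀ j, X j ≠ 0 → j ≤ M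

/-- `tailSum X j = ∑_{i ≥ j} X i`. -/
def tailSum (X : Config) (j : ℤ) : ℕ∞ :=
  ⨆ m : ℤ, ∑ i ∈ Finset.Icc j m, X i

/-- One step of the infinite-bin model dynamics: `Phi ξ X` adds one ball to the bin
immediately to the right of the bin containing the `ξ`-th rightmost ball of `X`
(i.e. to bin `B(X,ξ) + 1` where `B(X,ξ) = sup {j : ∑_{i ≥ j} X i ≥ ξ}`), and does
nothing when `B(X,ξ) = -∞`, i.e. when no bin `j` satisfies `∑_{i ≥ j} X i ≥ ξ`. -/
def Phi (ξ : ℕ) (X : Config) : Config := fun j =>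
  X j + (if (ξ : ℕ∞) ≤ tailSum X (j - 1) ∧ ¬ (ξ : ℕ∞) ≤ tailSum X j then 1 else 0)

/-- The infinite-bin model driven by the sequence `ξ`, started from `X₀`:
`X_{n+1} = Phi (ξ n) X_n`. -/
def ibm (X₀ : Config) (ξ : ℕ → ℕ) : ℕ → Config
  | 0 => X₀
  | n + 1 => Phi (ξ n) (ibm X₀ ξ n)

/-- `X_∞(k)`: the limit (= supremum, by monotonicity) of the number of balls in bin `k`. -/
def ibmLimit (X₀ : Config) (ξ : ℕ → ℕ) (k : ℤ) : ℕ∞ :=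
  ⨆ n, ibm X₀ ξ n k

/-- `ξ` is a sequence of i.i.d. random variables with law `μ` on `(Ω, P)`. -/
def IsIIDSeq {Ω : Type*} [MeasurableSpace Ω] (P : Measure Ω) (μ : Measure ℕ)
    (ξ : ℕ → Ω → ℕ) : Prop :=
  (∀ n, Measurable (ξ n)) ∧
    iIndepFun ξ P ∧ ∀ n, P.map (ξ n) = μ

/-- The barrier configuration `X̂₀`: an infinite bin at `0`, all other bins empty. -/
def barrier : Config := fun j => if j = 0 then ⊤ else 0

/-- The tail `μ̄(j) = μ({j, j+1, ...})` of a distribution on `ℕ`. -/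
def tailμ (μ : Measure ℕ) (j : ℕ) : ℝ≥0∞ := μ {i | j ≤ i}

/-- `μ` (represented by the i.i.d. driving sequence `ξ` on `(Ω, P)`) is of type `d`:
almost surely, `d = inf {k ≥ 1 : X̂_∞(k) < ∞}` for the IBM started from the barrier
configuration (with `inf ∅ = ∞` in `ℕ ∪ {∞}`). -/
def IsTypeOf {Ω : Type*} [MeasurableSpace Ω] (P : Measure Ω) (ξ : ℕ → Ω → ℕ)
    (d : ℕ∞) : Prop :=
  ∀ᵐ ω ∂P, sInf {k : ℕ∞ | ∃ m : ℕ, 1 ≤ m ∧ k = (m : ℕ∞) ∧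
    ibmLimit barrier (fun i => ξ i ω) (m : ℤ) < ⊤} = d

/-- `δ ∈ ℤ ∪ {-∞}` is the position `δ(X) = sup {j : X j = ∞}` of the rightmost
infinite bin ("barrier") of `X`, with `sup ∅ = -∞ = ⊥`. -/
def IsRightmostBarrier (X : Config) (δ : WithBot ℤ) : Prop :=
  (∀ j : ℤ, X j = ⊤ → (j : WithBot ℤ) ≤ δ) ∧
    (∀ j : ℤ, (j : WithBot ℤ) ≤ δ → ∃ i : ℤ, j ≤ i ∧ X i = ⊤)

end

/-! Let `V_s` and `C_s` be the numbers of balls in the bins `≥ k` and `≥ k - 1` at time `s`.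
Bin `k` receives the ball of step `s` only if `V_s < ξ_s ≤ C_s`, and every step with
`1 ≤ ξ_s ≤ C_s` increases `V`. So, for each value `v`, the event that some step has `V_s = v` and
`v < ξ_s ≤ C_s` has probability at most `2 μ̄(v + 1)`: by independence it is compared with the
event that some step has `V_s = v` and `1 ≤ ξ_s ≤ C_s`, and such a step is unique. Since
`∑ μ̄(v + 1) = ∑ n μ(n) < ∞`, Borel–Cantelli leaves only finitely many such values `v`, and
distinct balls received by bin `k` give distinct values. -/

open scoped Finset

def Lands (ξ : ℕ) (X : Config) (i : ℤ) : Prop :=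
  (ξ : ℕ∞) ≤ tailSum X (i - 1) ∧ ¬ (ξ : ℕ∞) ≤ tailSum X i

lemma Phi_apply (ξ : ℕ) (X : Config) (j : ℤ) :
    Phi ξ X j = X j + if Lands ξ X j then 1 else 0 := by
  simp [Phi, Lands]

lemma le_Phi (ξ : ℕ) (X : Config) (j : ℤ) : X j ≤ Phi ξ X j := le_self_add

lemma tailSum_mono {X Y : Config} (h : ∀ j, X j ≤ Y j) (j : ℤ) : tailSum X j ≤ tailSum Y j :=
  iSup_mono fun _ => Finset.sum_le_sum fun i _ => h i

lemma exists_ne_zero_of_tailSum_ne_zero {X : Config} {j : ℤ} (h : tailSum X j ≠ 0) :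
    ∃ i, j ≤ i ∧ X i ≠ 0 := by
  contrapose! h
  exact le_antisymm (iSup_le fun m => (Finset.sum_eq_zero fun i hi => h i
    (Finset.mem_Icc.1 hi).1).le) zero_le

lemma Lands.one_le {ξ : ℕ} {X : Config} {i : ℤ} (h : Lands ξ X i) : 1 ≤ ξ := by
  by_contra! h0
  exact h.2 (by simp [Nat.lt_one_iff.1 h0])

lemma Lands.tailSum_lt {ξ : ℕ} {X : Config} {i : ℤ} (h : Lands ξ X i) : tailSum X i < ξ :=
  lt_of_not_ge h.2

lemma Lands.exists_ne_zero {ξ : ℕ} {X : Config} {i : ℤ} (h : Lands ξ X i) :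
    ∃ j, i - 1 ≤ j ∧ X j ≠ 0 :=
  exists_ne_zero_of_tailSum_ne_zero <| ne_of_gt <|
    (Nat.cast_pos.2 h.one_le).trans_le h.1

lemma IsConfig.Phi {X : Config} (hX : IsConfig X) (ξ : ℕ) : IsConfig (Phi ξ X) := by
  obtain ⟨⟨j, hj⟩, M, hM⟩ := hX
  refine ⟨⟨j, ne_bot_of_le_ne_bot hj (le_Phi ξ X j)⟩, M + 1, fun i hi => ?_⟩
  by_cases hl : Lands ξ X i
  · obtain ⟨j, hij, hj⟩ := hl.exists_ne_zero
    linarith [hM j hj]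
  · have : X i ≠ 0 := by simpa [Phi_apply, hl] using hi
    linarith [hM i this]

lemma IsConfig.ibm {X₀ : Config} (hX₀ : IsConfig X₀) (a : ℕ → ℕ) (n : ℕ) :
    IsConfig (ibm X₀ a n) := by
  induction n with
  | zero => exact hX₀
  | succ n ih => exact ih.Phi (a n)

/-- Bounded support makes `B(X, ξ)` finite. -/
lemma IsConfig.exists_lands {X : Config} (hX : IsConfig X) {ξ : ℕ} (hξ : 1 ≤ ξ) {j : ℤ}
    (h : (ξ : ℕ∞) ≤ tailSum X j) : ∃ i, j < i ∧ Lands ξ X i := by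
  obtain ⟨M, hM⟩ := hX.2
  have hbdd : ∃ b : ℤ, ∀ z : ℤ, (ξ : ℕ∞) ≤ tailSum X z → z ≤ b := by
    refine ⟨M, fun z hz => ?_⟩
    obtain ⟨i, hzi, hi⟩ := exists_ne_zero_of_tailSum_ne_zero
      (ne_of_gt ((Nat.cast_pos.2 hξ).trans_le hz))
    linarith [hM i hi]
  obtain ⟨b, hb, hmax⟩ := Int.exists_greatest_of_bdd hbdd ⟨j, h⟩
  refine ⟨b + 1, by linarith [hmax j h], by simpa using hb, fun h' => ?_⟩
  linarith [hmax _ h']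

lemma add_one_le_tailSum_Phi {ξ : ℕ} {X : Config} {k i : ℤ} (hki : k ≤ i) (h : Lands ξ X i) :
    tailSum X k + 1 ≤ tailSum (Phi ξ X) k := by
  rw [tailSum, ENat.iSup_add]
  refine iSup_le fun m => ?_
  have hi : i ∈ Finset.Icc k (max m i) := Finset.mem_Icc.2 ⟨hki, le_max_right m i⟩
  calc ∑ j ∈ Finset.Icc k m, X j + 1
      ≤ ∑ j ∈ Finset.Icc k (max m i), X j + ∑ j ∈ Finset.Icc k (max m i),
          (if Lands ξ X j then 1 else 0) := by
        gcongr
        · exact le_max_left m i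
        · simpa [h] using Finset.single_le_sum (f := fun j => if Lands ξ X j then (1 : ℕ∞) else 0)
            (fun _ _ => zero_le) hi
    _ = ∑ j ∈ Finset.Icc k (max m i), Phi ξ X j := by
        rw [← Finset.sum_add_distrib]; simp only [Phi_apply]
    _ ≤ tailSum (Phi ξ X) k := le_iSup (fun m => ∑ j ∈ Finset.Icc k m, Phi ξ X j) _

section Trajectory

variable (X₀ : Config) (a : ℕ → ℕ)

lemma ibm_succ (n : ℕ) : ibm X₀ a (n + 1) = Phi (a n) (ibm X₀ a n) := rfl

lemma monotone_ibm (j : ℤ) : Monotone fun n => ibm X₀ a n j :=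
  monotone_nat_of_le_succ fun _ => le_Phi _ _ j

lemma dependsOn_ibm (n : ℕ) : DependsOn (fun a => ibm X₀ a n) (Finset.range n) := by
  induction n with
  | zero => exact fun _ _ _ => rfl
  | succ n ih =>
    intro a b h
    have hn : ibm X₀ a n = ibm X₀ b n := ih fun i hi => h i (by simp_all; omega)
    simp only [ibm_succ, hn, h n (by simp)]

lemma ibm_apply (n : ℕ) (k : ℤ) :
    ibm X₀ a n k = X₀ k + #{s ∈ Finset.range n | Lands (a s) (ibm X₀ a s) k} := by
  induction n with
  | zero => simp [ibm]
  | succ n ih =>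
    rw [ibm_succ, Phi_apply, ih, Finset.range_add_one, Finset.filter_insert]
    split_ifs with h
    · rw [Finset.card_insert_of_notMem (by simp), Nat.cast_succ, add_assoc]
    · rw [add_zero]

/-- A ball dropped at or above bin `k - 1` lands in a bin `≥ k`. -/
lemma tailSum_ibm_lt (hX₀ : IsConfig X₀) {k : ℤ} {s s' : ℕ} (hss' : s < s') (hs : 1 ≤ a s)
    (hcap : (a s : ℕ∞) ≤ tailSum (ibm X₀ a s) (k - 1)) (hfin : tailSum (ibm X₀ a s) k ≠ ⊤) :
    tailSum (ibm X₀ a s) k < tailSum (ibm X₀ a s') k := by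
  obtain ⟨i, hki, hi⟩ := (hX₀.ibm a s).exists_lands hs hcap
  calc tailSum (ibm X₀ a s) k < tailSum (ibm X₀ a s) k + 1 := (ENat.lt_add_one_iff hfin).2 le_rfl
    _ ≤ tailSum (ibm X₀ a (s + 1)) k := add_one_le_tailSum_Phi (by omega) hi
    _ ≤ tailSum (ibm X₀ a s') k := tailSum_mono (fun j => monotone_ibm X₀ a j hss') k

lemma ibmLimit_lt_top {k : ℤ} (hk : X₀ k < ⊤)
    (hfin : {s | Lands (a s) (ibm X₀ a s) k}.Finite) : ibmLimit X₀ a k < ⊤ := by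
  refine (iSup_le fun n => ?_).trans_lt
    (ENat.add_lt_top.2 ⟨hk, ENat.natCast_lt_top hfin.toFinset.card⟩)
  rw [ibm_apply]
  gcongr
  intro s hs
  simpa using (Finset.mem_filter.1 hs).2

lemma injOn_toNat_tailSum_ibm (hX₀ : IsConfig X₀) (k : ℤ) :
    Set.InjOn (fun s => (tailSum (ibm X₀ a s) k).toNat) {s | Lands (a s) (ibm X₀ a s) k} := by
  have key {s s'} (hss' : s < s') (hs : Lands (a s) (ibm X₀ a s) k)
      (hs' : Lands (a s') (ibm X₀ a s') k) :
      (tailSum (ibm X₀ a s) k).toNat ≠ (tailSum (ibm X₀ a s') k).toNat := by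
    have hfin := hs.tailSum_lt.ne_top
    have hlt := tailSum_ibm_lt X₀ a hX₀ hss' hs.one_le hs.1 hfin
    rw [← ENat.natCast_toNat hfin, ← ENat.natCast_toNat hs'.tailSum_lt.ne_top] at hlt
    exact (Nat.cast_lt.1 hlt).ne
  intro s hs s' hs' h
  rcases lt_trichotomy s s' with hss' | rfl | hss'
  exacts [absurd h (key hss' hs hs'), rfl, absurd h.symm (key hss' hs' hs)]

end Trajectory

def window (q : ℕ) (c : ℕ∞) : Set ℕ := {x | q ≤ x ∧ (x : ℕ∞) ≤ c}

lemma window_subset_window {q q' : ℕ} (h : q ≤ q') (c : ℕ∞) : window q' c ⊆ window q c :=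
  fun _ hx => ⟨h.trans hx.1, hx.2⟩

lemma measure_window_le (μ : Measure ℕ) [IsProbabilityMeasure μ] (hμ0 : μ {0} = 0) {q : ℕ}
    (hq : 1 ≤ q) (c : ℕ∞) : μ (window q c) ≤ 2 * tailμ μ q * μ (window 1 c) := by
  by_cases hqc : (q : ℕ∞) ≤ c
  swap
  · have : window q c = ∅ := Set.eq_empty_of_forall_notMem fun x hx =>
      hqc ((Nat.cast_le.2 hx.1).trans hx.2)
    simp [this]
  set t := tailμ μ q
  set w := μ (window 1 c)
  set x := μ (window q c)
  have hxt : x ≤ t := measure_mono fun _ hy => hy.1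
  have hxw : x ≤ w := measure_mono (window_subset_window hq c)
  have hcover : 1 ≤ w + t := calc
    1 = μ ({0} ∪ (window 1 c ∪ {i | q ≤ i})) := by
        rw [← measure_univ (μ := μ)]
        congr 1
        refine (Set.eq_univ_of_forall fun i => ?_).symm
        rcases Nat.eq_zero_or_pos i with rfl | hi
        · simp
        · by_cases hiq : q ≤ i
          · simp [hiq]
          · exact Or.inr (Or.inl ⟨hi, (Nat.cast_le.2 (by omega)).trans hqc⟩)
    _ ≤ μ {0} + (w + t) := (measure_union_le _ _).trans (by gcongr; exact measure_union_le _ _)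
    _ = w + t := by rw [hμ0, zero_add]
  calc x = x * 1 := (mul_one x).symm
    _ ≤ x * (w + t) := by gcongr
    _ = x * w + x * t := mul_add _ _ _
    _ ≤ t * w + w * t := by gcongr
    _ = 2 * t * w := by ring

lemma tsum_tailμ_succ (μ : Measure ℕ) :
    ∑' m : ℕ, tailμ μ (m + 1) = ∑' n : ℕ, (n : ℝ≥0∞) * μ {n} := by
  have htail (m : ℕ) : tailμ μ (m + 1) = ∑' n : ℕ, if m < n then μ {n} else 0 := by
    rw [tailμ, ← Measure.tsum_indicator_apply_singleton μ _ MeasurableSet.of_discrete]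
    congr 1 with n
    simp [Set.indicator]
  have hcount (n : ℕ) : ∑' m : ℕ, (if m < n then μ {n} else 0) = n * μ {n} := by
    rw [tsum_eq_sum (s := Finset.range n) fun m hm => if_neg (by simpa using hm),
      Finset.sum_congr rfl fun m hm => if_pos (Finset.mem_range.1 hm)]
    simp
  simp only [htail]
  rw [ENNReal.tsum_comm]
  simp only [hcount]

section DependsOnPast

variable {Ω β : Type*} {ξ : ℕ → Ω → β} {p : (ℕ → β) → Prop} {s : ℕ}

lemma setOf_eq_preimage_of_dependsOn (hp : DependsOn p (Finset.range s)) :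
    {ω | p (ξ · ω)} = (fun ω (i : Finset.range s) => ξ i ω) ⁻¹'
      {x | ∃ a, p a ∧ ∀ i : Finset.range s, a i = x i} := by
  ext ω
  refine ⟨fun h => ⟨_, h, fun _ => rfl⟩, fun ⟨a, ha, hax⟩ => ?_⟩
  change p (ξ · ω)
  rwa [← hp fun i hi => hax ⟨i, hi⟩]

variable [MeasurableSpace Ω] [MeasurableSpace β] [MeasurableSingletonClass β] [Countable β]

lemma measurableSet_setOf_of_dependsOn (hξ : ∀ n, Measurable (ξ n))
    (hp : DependsOn p (Finset.range s)) : MeasurableSet {ω | p (ξ · ω)} := by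
  rw [setOf_eq_preimage_of_dependsOn hp]
  exact (Set.to_countable _).measurableSet.preimage (measurable_pi_lambda _ fun i => hξ i)

lemma ProbabilityTheory.iIndepFun.measure_inter_preimage_eq_mul_of_dependsOn {P : Measure Ω}
    (hind : iIndepFun ξ P) (hξ : ∀ n, Measurable (ξ n)) (hp : DependsOn p (Finset.range s))
    (B : Set β) :
    P ({ω | p (ξ · ω)} ∩ ξ s ⁻¹' B) = P {ω | p (ξ · ω)} * P (ξ s ⁻¹' B) := by
  have hpast : IndepFun (fun ω (i : Finset.range s) => ξ i ω) (ξ s) P :=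
    (hind.indepFun_finset (Finset.range s) {s} (by simp) hξ).comp measurable_id
      (measurable_pi_apply (⟨s, Finset.mem_singleton_self s⟩ : ({s} : Finset ℕ)))
  rw [setOf_eq_preimage_of_dependsOn hp]
  exact hpast.measure_inter_preimage_eq_mul _ _ (Set.to_countable _).measurableSet
    (Set.to_countable _).measurableSet

end DependsOnPast

/-- Splitting on the step `s` and on the value `c` of `C s`, independence of `ξ s` from the past
costs a factor `2 μ̄(q)` for `q ≤ ξ s` against `1 ≤ ξ s`, and by `hsep` the events
`{V s = v, C s = c, 1 ≤ ξ s ≤ c}` are disjoint. -/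
theorem measure_exists_mem_window_le {Ω γ : Type*} [MeasurableSpace Ω] {P : Measure Ω}
    [IsProbabilityMeasure P] {μ : Measure ℕ} [IsProbabilityMeasure μ] (hμ0 : μ {0} = 0)
    {ξ : ℕ → Ω → ℕ} (hξ : IsIIDSeq P μ ξ) {V : ℕ → (ℕ → ℕ) → γ} {C : ℕ → (ℕ → ℕ) → ℕ∞}
    (hV : ∀ s, DependsOn (V s) (Finset.range s)) (hC : ∀ s, DependsOn (C s) (Finset.range s))
    {v : γ} (hsep : ∀ a s s', s < s' → V s a = v → a s ∈ window 1 (C s a) → V s' a ≠ v)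
    {q : ℕ} (hq : 1 ≤ q) :
    P {ω | ∃ s, V s (ξ · ω) = v ∧ ξ s ω ∈ window q (C s (ξ · ω))} ≤ 2 * tailμ μ q := by
  obtain ⟨hmeas, hind, hlaw⟩ := hξ
  let A (p : ℕ × ℕ∞) : Set Ω := {ω | V p.1 (ξ · ω) = v ∧ C p.1 (ξ · ω) = p.2}
  have hA (p : ℕ × ℕ∞) :
      DependsOn (fun a => V p.1 a = v ∧ C p.1 a = p.2) (Finset.range p.1) :=
    fun a b h => by simp only [hV p.1 h, hC p.1 h]
  have hmul (p : ℕ × ℕ∞) (r : ℕ) :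
      P (A p ∩ ξ p.1 ⁻¹' window r p.2) = P (A p) * μ (window r p.2) := by
    rw [hind.measure_inter_preimage_eq_mul_of_dependsOn hmeas (hA p),
      ← Measure.map_apply (hmeas _) MeasurableSet.of_discrete, hlaw]
  have hdisj :
      Pairwise (Function.onFun Disjoint fun p : ℕ × ℕ∞ => A p ∩ ξ p.1 ⁻¹' window 1 p.2) := by
    intro p p' hpp'
    refine Set.disjoint_left.2 fun ω ⟨⟨hV, hC⟩, hw⟩ ⟨⟨hV', hC'⟩, hw'⟩ => hpp' ?_
    rcases lt_trichotomy p.1 p'.1 with h | h | h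
    · exact absurd hV' (hsep _ _ _ h hV (hC ▸ hw))
    · refine Prod.ext h (hC.symm.trans ?_)
      rw [h, hC']
    · exact absurd hV (hsep _ _ _ h hV' (hC' ▸ hw'))
  have hunion : {ω | ∃ s, V s (ξ · ω) = v ∧ ξ s ω ∈ window q (C s (ξ · ω))} =
      ⋃ p : ℕ × ℕ∞, A p ∩ ξ p.1 ⁻¹' window q p.2 := by
    ext ω
    simp only [A, Set.mem_iUnion, Set.mem_inter_iff, Set.mem_ofPred_eq, Set.mem_preimage,
      Prod.exists]
    exact ⟨fun ⟨s, hs, hw⟩ => ⟨s, _, ⟨hs, rfl⟩, hw⟩, fun ⟨s, _, ⟨hs, rfl⟩, hw⟩ => ⟨s, hs, hw⟩⟩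
  calc P {ω | ∃ s, V s (ξ · ω) = v ∧ ξ s ω ∈ window q (C s (ξ · ω))}
      ≤ ∑' p : ℕ × ℕ∞, P (A p) * μ (window q p.2) := by
        rw [hunion]
        simpa only [hmul] using
          measure_iUnion_le (μ := P) fun p : ℕ × ℕ∞ => A p ∩ ξ p.1 ⁻¹' window q p.2
    _ ≤ ∑' p : ℕ × ℕ∞, 2 * tailμ μ q * (P (A p) * μ (window 1 p.2)) :=
        ENNReal.tsum_le_tsum fun p => by
          rw [mul_left_comm]
          gcongr
          exact measure_window_le μ hμ0 hq p.2
    _ = 2 * tailμ μ q * P (⋃ p : ℕ × ℕ∞, A p ∩ ξ p.1 ⁻¹' window 1 p.2) := by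
        rw [ENNReal.tsum_mul_left, measure_iUnion hdisj fun p =>
          (measurableSet_setOf_of_dependsOn hmeas (hA p)).inter
            (hmeas _ MeasurableSet.of_discrete)]
        simp only [hmul]
    _ ≤ 2 * tailμ μ q := mul_le_of_le_one_right' prob_le_one

/-- If `∑ n μ(n) < ∞`, then for any initial configuration `X₀ ∈ 𝒮` and any
`k ∈ ℤ` with `X₀(k) < ∞`, the IBM(μ) started from `X₀` satisfies `X_∞(k) < ∞` a.s. -/
theorem stmt0 {Ω : Type*} [MeasurableSpace Ω] (P : Measure Ω) [IsProbabilityMeasure P]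
    (μ : Measure ℕ) [IsProbabilityMeasure μ] (hμ0 : μ {0} = 0)
    (ξ : ℕ → Ω → ℕ) (hξ : IsIIDSeq P μ ξ)
    (hmom : ∑' n : ℕ, (n : ℝ≥0∞) * μ {n} < ⊤)
    (X₀ : Config) (hX₀ : IsConfig X₀) (k : ℤ) (hk : X₀ k < ⊤) :
    ∀ᵐ ω ∂P, ibmLimit X₀ (fun i => ξ i ω) k < ⊤ := by
  let V (s : ℕ) (a : ℕ → ℕ) : ℕ∞ := tailSum (ibm X₀ a s) k
  let C (s : ℕ) (a : ℕ → ℕ) : ℕ∞ := tailSum (ibm X₀ a s) (k - 1)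
  let E (v : ℕ) : Set Ω := {ω | ∃ s, V s (ξ · ω) = v ∧ ξ s ω ∈ window (v + 1) (C s (ξ · ω))}
  have hE (v : ℕ) : P (E v) ≤ 2 * tailμ μ (v + 1) := by
    refine measure_exists_mem_window_le hμ0 hξ (fun s a b h => ?_) (fun s a b h => ?_)
      (fun a s s' hss' hv ha => ?_) (Nat.le_add_left 1 v)
    · simp only [V, dependsOn_ibm X₀ s h]
    · simp only [C, dependsOn_ibm X₀ s h]
    · simp only [V] at hv ⊢
      rw [← hv]
      exact (tailSum_ibm_lt X₀ a hX₀ hss' ha.1 ha.2 (hv ▸ ENat.natCast_ne_top v)).ne'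
  have hsum : ∑' v, P (E v) ≠ ⊤ := by
    refine ne_top_of_le_ne_top ?_ (ENNReal.tsum_le_tsum hE)
    rw [ENNReal.tsum_mul_left, tsum_tailμ_succ]
    exact ENNReal.mul_ne_top (by simp) hmom.ne
  filter_upwards [ae_finite_setOfPred_mem hsum] with ω hfin
  refine ibmLimit_lt_top X₀ _ hk <|
    hfin.of_injOn (fun s hs => ?_) (injOn_toNat_tailSum_ibm X₀ _ hX₀ k)
  have hlt := hs.tailSum_lt
  rw [← ENat.natCast_toNat hlt.ne_top] at hlt
  exact ⟨s, (ENat.natCast_toNat hs.tailSum_lt.ne_top).symm, Nat.cast_lt.1 hlt, hs.1⟩
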